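/- arXiv:2508.16561 — 5 statements merged into one kernel-verified Lean document; each statement's English description precedes it below -/
import Mathlib

section
/- Let Θ be a regular simplex in R^n with radius δ, let x_r = −x_{n+1} + (2/n)·Σ_{i=1}^n x_i, and define G = −x_r x_rᵀ + (2/n)·Σ_{i=1}^n x_i x_iᵀ − x_{n+1} x_{n+1}ᵀ. Then G = (2(n+1)/n²)·δ²·I_n − (2(n+1)(n+2)/n²)·δ²·u uᵀ, where u = (x_{n+1} − c)/δ and c is the centroid. -/
/-!
The centred vertices `vᵢ = xᵢ - c` of a regular simplex form a tight frame:
`M = ∑ vᵢ vᵢᵀ` is symmetric, satisfies `M² = ((n+1)/n) δ² M` because of the Gram relations and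
`∑ vᵢ = 0`, and has trace `(n+1) δ²`; together these force `M = ((n+1)/n) δ² I`.
Since `x_r - c = -((n+2)/n) (x_{n+1} - c)` and the weights `-1, 2/n, -1` sum to zero, the terms
involving `c` cancel in `G`, leaving `(2/n) M - ((n+2)²/n² + 2/n + 1) (x_{n+1} - c)(x_{n+1} - c)ᵀ`.
-/

open Matrix

namespace Matrix

variable {ι m n α : Type*}

theorem vecMulVec_sum [NonUnitalNonAssocSemiring α] (w : m → α) (s : Finset ι) (v : ι → n → α) :
    vecMulVec w (∑ i ∈ s, v i) = ∑ i ∈ s, vecMulVec w (v i) := by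
  ext a b
  simp only [vecMulVec_apply, Finset.sum_apply, Matrix.sum_apply, Finset.mul_sum]

theorem sum_vecMulVec [NonUnitalNonAssocSemiring α] (s : Finset ι) (w : ι → m → α) (v : n → α) :
    vecMulVec (∑ i ∈ s, w i) v = ∑ i ∈ s, vecMulVec (w i) v := by
  ext a b
  simp only [vecMulVec_apply, Finset.sum_apply, Matrix.sum_apply, Finset.sum_mul]

theorem eq_smul_one_of_mul_self_eq_smul [Fintype m] [DecidableEq m] {A : Matrix m m ℝ} {μ : ℝ}
    (hA : Aᵀ = A) (hsq : A * A = μ • A) (htr : A.trace = Fintype.card m * μ) :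
    A = μ • 1 := by
  have hB : ((A - μ • 1)ᴴ * (A - μ • 1)).trace = 0 := by
    have hBB : (A - μ • 1) * (A - μ • 1) = μ ^ 2 • (1 : Matrix m m ℝ) - μ • A := by
      simp only [sub_mul, mul_sub, mul_smul_comm, smul_mul_assoc, mul_one, one_mul, hsq]
      module
    rw [conjTranspose_eq_transpose_of_trivial, transpose_sub, hA, transpose_smul, transpose_one,
      hBB, trace_sub, trace_smul, trace_smul, trace_one, htr, smul_eq_mul, smul_eq_mul]
    ring
  exact sub_eq_zero.mp (trace_conjTranspose_mul_self_eq_zero_iff.mp hB)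

theorem sum_vecMulVec_self_eq_smul_one [Fintype ι] [DecidableEq ι] [Fintype m] [DecidableEq m]
    (v : ι → m → ℝ) {d e : ℝ} (hsum : ∑ i, v i = 0)
    (hgram : ∀ i j, v i ⬝ᵥ v j = (if i = j then d else 0) + e)
    (hcard : Fintype.card ι * (d + e) = Fintype.card m * d) :
    ∑ i, vecMulVec (v i) (v i) = d • 1 := by
  have hfix : ∀ i, ∑ j, (v i ⬝ᵥ v j) • v j = d • v i := fun i => by
    simp only [hgram, add_smul, ite_smul, zero_smul, Finset.sum_add_distrib, Finset.sum_ite_eq,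
      Finset.mem_univ, if_true, ← Finset.smul_sum, hsum, smul_zero, add_zero]
  apply eq_smul_one_of_mul_self_eq_smul
  · simp only [transpose_sum, transpose_vecMulVec]
  · calc (∑ i, vecMulVec (v i) (v i)) * ∑ j, vecMulVec (v j) (v j)
        = ∑ i, vecMulVec (v i) (∑ j, (v i ⬝ᵥ v j) • v j) := by
          simp only [Finset.sum_mul_sum, vecMulVec_mul_vecMulVec, vecMulVec_sum]
      _ = d • ∑ i, vecMulVec (v i) (v i) := by
          simp only [hfix, vecMulVec_smul, Finset.smul_sum]
  · simp only [trace_sum, trace_vecMulVec, hgram, if_true, Finset.sum_const, Finset.card_univ,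
      nsmul_eq_mul]
    exact hcard

end Matrix

theorem sum_sub_eq_zero_of_eq_centroid {ι E : Type*} [Fintype ι] [Nonempty ι] [AddCommGroup E]
    [Module ℝ E] (x : ι → E) {c : E} (hc : c = (Fintype.card ι : ℝ)⁻¹ • ∑ i, x i) :
    ∑ i, (x i - c) = 0 := by
  rw [Finset.sum_sub_distrib, Finset.sum_const, Finset.card_univ, ← Nat.cast_smul_eq_nsmul ℝ, hc,
    smul_smul, mul_inv_cancel₀ (by positivity), one_smul, sub_self]

theorem sum_castSucc_sub_eq_neg_last {E : Type*} [AddCommGroup E] [Module ℝ E] {n : ℕ}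
    (x : Fin (n + 1) → E) {c : E} (hc : c = (1 / (n + 1 : ℝ)) • ∑ i, x i) :
    ∑ i : Fin n, (x i.castSucc - c) = -(x (Fin.last n) - c) := by
  have h := sum_sub_eq_zero_of_eq_centroid x (by simpa using hc)
  rw [Fin.sum_univ_castSucc] at h
  exact eq_neg_of_add_eq_zero_left h

theorem neg_last_add_smul_sum_castSucc_eq {E : Type*} [AddCommGroup E] [Module ℝ E] {n : ℕ}
    (hn : n ≠ 0) (x : Fin (n + 1) → E) {c : E} (hc : c = (1 / (n + 1 : ℝ)) • ∑ i, x i) :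
    -x (Fin.last n) + (2 / (n : ℝ)) • ∑ i : Fin n, x i.castSucc
      = c - ((n + 2) / n : ℝ) • (x (Fin.last n) - c) := by
  have hn' : (n : ℝ) ≠ 0 := Nat.cast_ne_zero.mpr hn
  have hsum := sum_castSucc_sub_eq_neg_last x hc
  rw [Finset.sum_sub_distrib, Finset.sum_const, Finset.card_univ, Fintype.card_fin,
    sub_eq_iff_eq_add, ← Nat.cast_smul_eq_nsmul ℝ] at hsum
  rw [hsum]
  match_scalars <;> field_simp <;> ring

theorem sum_vecMulVec_sub_centroid_eq_smul_one {n : ℕ} (hn : n ≠ 0)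
    (x : Fin (n + 1) → EuclideanSpace ℝ (Fin n)) {c : EuclideanSpace ℝ (Fin n)} {δ : ℝ}
    (hc : c = (1 / (n + 1 : ℝ)) • ∑ i, x i) (hrad : ∀ i, ‖x i - c‖ = δ)
    (hinner : ∀ i j, i ≠ j → (inner ℝ (x i - c) (x j - c) : ℝ) = -δ ^ 2 / n) :
    ∑ i, vecMulVec ⇑(x i - c) ⇑(x i - c) = ((n + 1) / n * δ ^ 2) • 1 := by
  have hn' : (n : ℝ) ≠ 0 := Nat.cast_ne_zero.mpr hn
  refine sum_vecMulVec_self_eq_smul_one _ (e := -δ ^ 2 / n) ?_ (fun i j => ?_) ?_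
  · rw [← WithLp.ofLp_sum, sum_sub_eq_zero_of_eq_centroid x (by simpa using hc), WithLp.ofLp_zero]
  · rw [← star_trivial ⇑(x i - c), dotProduct_comm, ← EuclideanSpace.inner_eq_star_dotProduct]
    split_ifs with hij
    · rw [hij, real_inner_self_eq_norm_sq, hrad]
      field_simp
      ring
    · rw [hinner i j hij, zero_add]
  · simp only [Fintype.card_fin]
    push_cast
    field_simp
    ring

/-- The matrix `G` associated with the reflection query of a regular simplex has
the spectral form `(2(n+1)/n²)·δ²·I − (2(n+1)(n+2)/n²)·δ²·u uᵀ`, where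
`u = (x_{n+1} − c)/δ`. -/
theorem reflection_G_formula (n : ℕ) (hn : 1 ≤ n)
    (x : Fin (n + 1) → EuclideanSpace ℝ (Fin n))
    (c : EuclideanSpace ℝ (Fin n)) (δ : ℝ) (hδ : 0 < δ)
    (hc : c = (1 / (n + 1 : ℝ)) • ∑ i, x i)
    (hrad : ∀ i, ‖x i - c‖ = δ)
    (hinner : ∀ i j : Fin (n + 1), i ≠ j →
      (inner ℝ (x i - c) (x j - c) : ℝ) = -δ ^ 2 / n)
    (xr : EuclideanSpace ℝ (Fin n))
    (hxr : xr = -x (Fin.last n) + (2 / (n : ℝ)) • ∑ i : Fin n, x i.castSucc)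
    (u : EuclideanSpace ℝ (Fin n))
    (hu : u = δ⁻¹ • (x (Fin.last n) - c))
    (G : Matrix (Fin n) (Fin n) ℝ)
    (hG : G = Matrix.of (fun a b : Fin n =>
      -(xr a * xr b)
      + (2 / (n : ℝ)) * ∑ i : Fin n, x i.castSucc a * x i.castSucc b
      - x (Fin.last n) a * x (Fin.last n) b)) :
    G = ((2 * (n + 1 : ℝ) / n ^ 2) * δ ^ 2) • (1 : Matrix (Fin n) (Fin n) ℝ)
      - ((2 * (n + 1 : ℝ) * (n + 2) / n ^ 2) * δ ^ 2)
          • Matrix.of (fun a b : Fin n => u a * u b) := by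
  have hn0 : (n : ℝ) ≠ 0 := by positivity
  set w : Fin (n + 1) → Fin n → ℝ := fun i => ⇑(x i - c) with hw_def
  have hx : ∀ i, ⇑(x i) = ⇑c + w i := fun i => by simp [hw_def]
  have hlast : w (Fin.last n) = δ • ⇑u := by
    rw [hu, WithLp.ofLp_smul, smul_smul, mul_inv_cancel₀ hδ.ne', one_smul]
  have hsum : ∑ i : Fin n, w i.castSucc = -(δ • ⇑u) := by
    have h := congrArg WithLp.ofLp (sum_castSucc_sub_eq_neg_last x hc)
    rw [WithLp.ofLp_sum, WithLp.ofLp_neg] at h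
    rw [← hlast]
    exact h
  have hframe : ∑ i : Fin n, vecMulVec (w i.castSucc) (w i.castSucc)
      = ((n + 1) / n * δ ^ 2) • 1 - δ ^ 2 • vecMulVec ⇑u ⇑u := by
    have hM : ∑ i, vecMulVec (w i) (w i) = ((n + 1) / n * δ ^ 2) • 1 :=
      sum_vecMulVec_sub_centroid_eq_smul_one (by omega) x hc hrad hinner
    rw [← hM, Fin.sum_univ_castSucc, hlast, vecMulVec_smul, smul_vecMulVec, smul_smul, sq]
    abel
  have hxr' : ⇑xr = ⇑c - ((n + 2) / n * δ) • ⇑u := by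
    rw [hxr, neg_last_add_smul_sum_castSucc_eq (by omega) x hc, WithLp.ofLp_sub, WithLp.ofLp_smul]
    change ⇑c - _ • w (Fin.last n) = _
    rw [hlast, smul_smul]
  have hG' : G = -vecMulVec xr xr
      + (2 / (n : ℝ)) • ∑ i : Fin n, vecMulVec (x i.castSucc) (x i.castSucc)
      - vecMulVec (x (Fin.last n)) (x (Fin.last n)) := by
    rw [hG]
    ext a b
    simp [vecMulVec_apply, Matrix.sum_apply]
  have hu' : Matrix.of (fun a b : Fin n => u a * u b) = vecMulVec ⇑u ⇑u := rfl
  simp only [hG', hu', hxr', hx, vecMulVec_add, add_vecMulVec, vecMulVec_sub, sub_vecMulVec,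
    vecMulVec_smul, smul_vecMulVec, vecMulVec_neg, neg_vecMulVec, Finset.sum_add_distrib,
    ← vecMulVec_sum, ← sum_vecMulVec, hsum, hframe, hlast, Finset.sum_const, Finset.card_univ,
    Fintype.card_fin]
  match_scalars <;> field_simp <;> ring
end

section
/- Let f : R^n → R be L-smooth and let Θ = {x_1,...,x_{n+1}} be a regular simplex of radius δ with reflection point x_r = −x_{n+1} + (2/n)·Σ_{i=1}^n x_i. Then |f(x_r) + f(x_{n+1}) − (2/n)·Σ_{i=1}^n f(x_i)| ≤ ((2n+2)/n)·L·δ². -/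
/-!
Expand `f` to first order around the centroid `m` of the face opposite `x_{n+1}`. Since
`x_r + x_{n+1} = 2m` and the `x_i` (`i ≤ n`) average to `m`, the linear terms cancel and the
combination is a combination of Taylor remainders, each bounded by `L/2 · ‖w - m‖²`. In a regular
simplex `‖x_{n+1} - m‖ = ‖x_r - m‖ = (1 + 1/n) δ` and `‖x_i - m‖² = (1 - 1/n²) δ²`, and
`(1 + 1/n)² + 1 - 1/n² = (2n + 2)/n`.
-/

open scoped RealInnerProductSpace

section QuadraticGrowth

variable {F : Type*} [NormedAddCommGroup F] [NormedSpace ℝ F]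

lemma norm_le_of_norm_deriv_le_mul {φ φ' : ℝ → F} {K : ℝ} (h0 : φ 0 = 0)
    (hφ : ∀ t, HasDerivAt φ (φ' t) t) (hbound : ∀ t, 0 ≤ t → ‖φ' t‖ ≤ K * t)
    {t : ℝ} (ht : 0 ≤ t) : ‖φ t‖ ≤ K / 2 * t ^ 2 :=
  image_norm_le_of_norm_deriv_right_le_deriv_boundary (a := 0) (b := t)
    (B := fun s => K / 2 * s ^ 2) (B' := fun s => K * s)
    (fun s _ => (hφ s).continuousAt.continuousWithinAt) (fun s _ => (hφ s).hasDerivWithinAt)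
    (by simp [h0])
    (fun s => ((hasDerivAt_pow 2 s).const_mul (K / 2)).congr_deriv (by ring))
    (fun s hs => hbound s hs.1) ⟨ht, le_rfl⟩

end QuadraticGrowth

section LinearizationError

variable {E : Type*} [NormedAddCommGroup E] [InnerProductSpace ℝ E] [CompleteSpace E]

noncomputable def linearizationError (f : E → ℝ) (z w : E) : ℝ :=
  f w - f z - ⟪gradient f z, w - z⟫

lemma abs_linearizationError_le {f : E → ℝ} {L : ℝ} (hdiff : Differentiable ℝ f)
    (hlip : ∀ y z : E, ‖gradient f y - gradient f z‖ ≤ L * ‖y - z‖) (z w : E) :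
    |linearizationError f z w| ≤ L / 2 * ‖w - z‖ ^ 2 := by
  set d := w - z
  set g := gradient f z
  let φ : ℝ → ℝ := fun t => f (z + t • d) - t * ⟪g, d⟫ - f z
  have hφ : ∀ t, HasDerivAt φ ⟪gradient f (z + t • d) - g, d⟫ t := by
    intro t
    have hline : HasDerivAt (fun t : ℝ => z + t • d) d t := by
      simpa using ((hasDerivAt_id t).smul_const d).const_add z
    have hcomp := (hdiff (z + t • d)).hasGradientAt.hasFDerivAt.comp_hasDerivAt t hline
    simpa [φ, inner_sub_left] using (hcomp.sub (hasDerivAt_mul_const ⟪g, d⟫)).sub_const (f z)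
  have hbound : ∀ t, 0 ≤ t → ‖⟪gradient f (z + t • d) - g, d⟫‖ ≤ L * ‖d‖ ^ 2 * t := by
    intro t ht
    calc ‖⟪gradient f (z + t • d) - g, d⟫‖ ≤ ‖gradient f (z + t • d) - g‖ * ‖d‖ :=
          norm_inner_le_norm _ _
      _ ≤ L * ‖t • d‖ * ‖d‖ := by
          gcongr
          simpa using hlip (z + t • d) z
      _ = L * ‖d‖ ^ 2 * t := by
          rw [norm_smul, Real.norm_eq_abs, abs_of_nonneg ht]; ring
  have hφ1 : φ 1 = linearizationError f z w := by
    simp only [φ, linearizationError, d, g, one_smul, one_mul, add_sub_cancel]; ring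
  have h1 := norm_le_of_norm_deriv_le_mul (by simp [φ]) hφ hbound zero_le_one
  rw [hφ1, Real.norm_eq_abs] at h1
  linarith

lemma reflection_combination_eq_linearizationError (f : E → ℝ) {n : ℕ} (hn : n ≠ 0)
    (y : Fin n → E) {m p q : E} (hm : ∑ i, y i = (n : ℝ) • m) (hpq : p + q = (2 : ℝ) • m) :
    f p + f q - (2 / (n : ℝ)) * ∑ i, f (y i) =
      linearizationError f m p + linearizationError f m q -
        (2 / (n : ℝ)) * ∑ i, linearizationError f m (y i) := by
  set g := gradient f m
  have hpq' : ⟪g, p - m⟫ + ⟪g, q - m⟫ = 0 := by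
    rw [← inner_add_right, show p - m + (q - m) = p + q - (2 : ℝ) • m by module, hpq,
      sub_self, inner_zero_right]
  have hy : ∑ i, ⟪g, y i - m⟫ = 0 := by
    rw [← inner_sum, Finset.sum_sub_distrib, hm, Finset.sum_const, Finset.card_univ,
      Fintype.card_fin, ← Nat.cast_smul_eq_nsmul ℝ, sub_self, inner_zero_right]
  simp only [linearizationError, Finset.sum_sub_distrib, Finset.sum_const, Finset.card_univ,
    Fintype.card_fin, nsmul_eq_mul]
  have hn' : (n : ℝ) ≠ 0 := Nat.cast_ne_zero.mpr hn
  field_simp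
  linear_combination (n : ℝ) * hpq' - 2 * hy

lemma abs_reflection_combination_le {f : E → ℝ} {L : ℝ} (hdiff : Differentiable ℝ f)
    (hlip : ∀ y z : E, ‖gradient f y - gradient f z‖ ≤ L * ‖y - z‖) {n : ℕ} (hn : n ≠ 0)
    (y : Fin n → E) {m p q : E} (hm : ∑ i, y i = (n : ℝ) • m) (hpq : p + q = (2 : ℝ) • m) :
    |f p + f q - (2 / (n : ℝ)) * ∑ i, f (y i)| ≤
      L / 2 * (‖p - m‖ ^ 2 + ‖q - m‖ ^ 2) + L / n * ∑ i, ‖y i - m‖ ^ 2 := by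
  have hR := abs_linearizationError_le hdiff hlip m
  rw [reflection_combination_eq_linearizationError f hn y hm hpq]
  calc _ ≤ |linearizationError f m p| + |linearizationError f m q| +
        2 / (n : ℝ) * ∑ i, |linearizationError f m (y i)| := by
        refine (abs_sub _ _).trans (add_le_add (abs_add_le _ _) ?_)
        rw [abs_mul, abs_of_nonneg (by positivity)]
        gcongr
        exact Finset.abs_sum_le_sum_abs _ _
    _ ≤ L / 2 * ‖p - m‖ ^ 2 + L / 2 * ‖q - m‖ ^ 2 +
        2 / (n : ℝ) * ∑ i, L / 2 * ‖y i - m‖ ^ 2 := by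
        gcongr with i _
        · exact hR p
        · exact hR q
        · exact hR (y i)
    _ = _ := by rw [← Finset.mul_sum]; ring

end LinearizationError

section RegularSimplex

variable {E : Type*} [NormedAddCommGroup E] [InnerProductSpace ℝ E]

lemma sum_castSucc_eq_of_eq_centroid {n : ℕ} {x : Fin (n + 1) → E} {c : E}
    (hc : c = (1 / (n + 1 : ℝ)) • ∑ i, x i) :
    ∑ i : Fin n, x i.castSucc = (n : ℝ) • c - (x (Fin.last n) - c) := by
  have hsum : ∑ i, x i = ((n : ℝ) + 1) • c := by
    rw [hc, smul_smul, mul_one_div_cancel (by positivity), one_smul]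
  rw [Fin.sum_univ_castSucc] at hsum
  rw [eq_sub_of_add_eq hsum]
  module

/-- For vertices `x_i ≠ x_j` of a regular simplex centred at `c`, with `u = x_i - c` and
`v = x_j - c`, the vector `u + v / n` is `x_i` minus the centroid of the face opposite `x_j`. -/
lemma norm_sub_face_centroid_sq {n : ℕ} (hn : n ≠ 0) {u v : E} {δ : ℝ} (hu : ‖u‖ = δ)
    (hv : ‖v‖ = δ) (huv : ⟪u, v⟫ = -δ ^ 2 / n) :
    ‖u + (n : ℝ)⁻¹ • v‖ ^ 2 = δ ^ 2 - δ ^ 2 / (n : ℝ) ^ 2 := by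
  have hn' : (n : ℝ) ≠ 0 := Nat.cast_ne_zero.mpr hn
  rw [norm_add_sq_real, real_inner_smul_right, huv, norm_smul, Real.norm_eq_abs, mul_pow,
    sq_abs, hu, hv]
  field_simp
  ring

end RegularSimplex

theorem reflection_error_bound_general (n : ℕ) (hn : 1 ≤ n) (L : ℝ)
    (f : EuclideanSpace ℝ (Fin n) → ℝ)
    (hdiff : Differentiable ℝ f)
    (hlip : ∀ y z : EuclideanSpace ℝ (Fin n),
      ‖gradient f y - gradient f z‖ ≤ L * ‖y - z‖)
    (x : Fin (n + 1) → EuclideanSpace ℝ (Fin n))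
    (c : EuclideanSpace ℝ (Fin n)) (δ : ℝ)
    (hc : c = (1 / (n + 1 : ℝ)) • ∑ i, x i)
    (hrad : ∀ i, ‖x i - c‖ = δ)
    (hinner : ∀ i j : Fin (n + 1), i ≠ j →
      (inner ℝ (x i - c) (x j - c) : ℝ) = -δ ^ 2 / n)
    (xr : EuclideanSpace ℝ (Fin n))
    (hxr : xr = -x (Fin.last n) + (2 / (n : ℝ)) • ∑ i : Fin n, x i.castSucc) :
    |f xr + f (x (Fin.last n)) - (2 / (n : ℝ)) * ∑ i : Fin n, f (x i.castSucc)|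
      ≤ ((2 * n + 2 : ℝ) / n) * L * δ ^ 2 := by
  have hn0 : n ≠ 0 := by omega
  have hn' : (n : ℝ) ≠ 0 := Nat.cast_ne_zero.mpr hn0
  set v := x (Fin.last n) - c
  set m := c - (n : ℝ)⁻¹ • v
  have hm : ∑ i : Fin n, x i.castSucc = (n : ℝ) • m := by
    rw [sum_castSucc_eq_of_eq_centroid hc, smul_sub, smul_smul, mul_inv_cancel₀ hn', one_smul]
  have hpq : xr + x (Fin.last n) = (2 : ℝ) • m := by
    rw [hxr, hm, smul_smul, div_mul_cancel₀ _ hn']; module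
  have hlast : ‖x (Fin.last n) - m‖ ^ 2 = (1 + (n : ℝ)⁻¹) ^ 2 * δ ^ 2 := by
    rw [show x (Fin.last n) - m = (1 + (n : ℝ)⁻¹) • v by module, norm_smul, mul_pow,
      Real.norm_eq_abs, sq_abs, hrad]
  have hxr_m : ‖xr - m‖ = ‖x (Fin.last n) - m‖ := by
    rw [eq_sub_of_add_eq hpq, ← norm_neg]; congr 1; module
  have hface : ∀ i : Fin n, ‖x i.castSucc - m‖ ^ 2 = δ ^ 2 - δ ^ 2 / (n : ℝ) ^ 2 := fun i => by
    rw [show x i.castSucc - m = (x i.castSucc - c) + (n : ℝ)⁻¹ • v by module]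
    exact norm_sub_face_centroid_sq hn0 (hrad _) (hrad _)
      (hinner _ _ (Fin.castSucc_lt_last i).ne)
  calc _ ≤ L / 2 * (‖xr - m‖ ^ 2 + ‖x (Fin.last n) - m‖ ^ 2) +
        L / n * ∑ i : Fin n, ‖x i.castSucc - m‖ ^ 2 :=
        abs_reflection_combination_le hdiff hlip hn0 _ hm hpq
    _ = ((2 * n + 2 : ℝ) / n) * L * δ ^ 2 := by
        simp only [hxr_m, hlast, hface, Finset.sum_const, Finset.card_univ, Fintype.card_fin,
          nsmul_eq_mul]
        field_simp
        ring

/-- Reflection extrapolation error bound (nonconvex case): for an `L`-smooth `f`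
and a regular simplex of radius `δ`,
`|f(x_r) + f(x_{n+1}) − (2/n)·∑_{i≤n} f(x_i)| ≤ ((2n+2)/n)·L·δ²`. -/
theorem reflection_error_bound (n : ℕ) (hn : 1 ≤ n) (L : ℝ) (hL : 0 < L)
    (f : EuclideanSpace ℝ (Fin n) → ℝ)
    (hdiff : Differentiable ℝ f)
    (hlip : ∀ y z : EuclideanSpace ℝ (Fin n),
      ‖gradient f y - gradient f z‖ ≤ L * ‖y - z‖)
    (x : Fin (n + 1) → EuclideanSpace ℝ (Fin n))
    (c : EuclideanSpace ℝ (Fin n)) (δ : ℝ) (hδ : 0 < δ)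
    (hc : c = (1 / (n + 1 : ℝ)) • ∑ i, x i)
    (hrad : ∀ i, ‖x i - c‖ = δ)
    (hinner : ∀ i j : Fin (n + 1), i ≠ j →
      (inner ℝ (x i - c) (x j - c) : ℝ) = -δ ^ 2 / n)
    (xr : EuclideanSpace ℝ (Fin n))
    (hxr : xr = -x (Fin.last n) + (2 / (n : ℝ)) • ∑ i : Fin n, x i.castSucc) :
    |f xr + f (x (Fin.last n)) - (2 / (n : ℝ)) * ∑ i : Fin n, f (x i.castSucc)|
      ≤ ((2 * n + 2 : ℝ) / n) * L * δ ^ 2 :=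
  reflection_error_bound_general n hn L f hdiff hlip x c δ hc hrad hinner xr hxr
end

section
/- Let f : R^n → R be convex and L-smooth, and let Θ be a regular simplex of radius δ with reflection point x_r = −x_{n+1} + (2/n)·Σ_{i=1}^n x_i. Then |f(x_r) + f(x_{n+1}) − (2/n)·Σ_{i=1}^n f(x_i)| ≤ (1 + 1/n)²·L·δ². -/
/-!
The combination `f xr + f x_{n+1} - (2/n) ∑ f x_i` has weights summing to zero and
`xr + x_{n+1} = (2/n) ∑ x_i`, so for every base point `w` it equals the same combination of
Bregman divergences `D_f(·, w)`. Convexity and `L`-smoothness give `0 ≤ D_f(z, w) ≤ L/2 ‖z - w‖²`.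
Take for `w` the centroid `g` of the facet `x_1, …, x_n`, which is also the midpoint of `xr` and
`x_{n+1}`: then `‖xr - g‖ = ‖x_{n+1} - g‖ = (1 + 1/n) δ` bounds the combination from above, and
`‖x_i - g‖² = (1 - 1/n²) δ²` bounds it from below by `-(1 - 1/n²) L δ²`.
-/

open Finset
open scoped InnerProductSpace

section Bregman

variable {E : Type*} [NormedAddCommGroup E] [InnerProductSpace ℝ E] [CompleteSpace E]

noncomputable def bregmanDiv (f : E → ℝ) (z w : E) : ℝ := f z - f w - ⟪gradient f w, z - w⟫_ℝ

variable {f : E → ℝ}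

theorem Differentiable.hasDerivAt_comp_lineMap (hf : Differentiable ℝ f) (w z : E) (t : ℝ) :
    HasDerivAt (f ∘ AffineMap.lineMap w z) ⟪gradient f (AffineMap.lineMap w z t), z - w⟫_ℝ t := by
  have hline : HasDerivAt (AffineMap.lineMap w z : ℝ → E) (z - w) t :=
    AffineMap.hasDerivAt_lineMap
  have := (hasGradientAt_iff_hasFDerivAt.mp (hf _).hasGradientAt).comp_hasDerivAt t hline
  simpa using this

theorem ConvexOn.bregmanDiv_nonneg (hconv : ConvexOn ℝ Set.univ f) (hf : Differentiable ℝ f)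
    (z w : E) : 0 ≤ bregmanDiv f z w := by
  have hline : ConvexOn ℝ Set.univ (f ∘ AffineMap.lineMap w z) :=
    hconv.comp_affineMap (AffineMap.lineMap w z)
  have := hline.le_slope_of_hasDerivAt (Set.mem_univ 0) (Set.mem_univ 1) zero_lt_one
    (hf.hasDerivAt_comp_lineMap w z 0)
  rw [slope_def_field, Function.comp_apply, Function.comp_apply, AffineMap.lineMap_apply_zero,
    AffineMap.lineMap_apply_one, sub_zero, div_one] at this
  rw [bregmanDiv]
  linarith

theorem bregmanDiv_le_of_lipschitz_gradient (hf : Differentiable ℝ f) {L : ℝ}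
    (hlip : ∀ y z, ‖gradient f y - gradient f z‖ ≤ L * ‖y - z‖) (z w : E) :
    bregmanDiv f z w ≤ L / 2 * ‖z - w‖ ^ 2 := by
  set v := z - w
  let ψ : ℝ → ℝ := fun s ↦
    f (AffineMap.lineMap w z s) - s * ⟪gradient f w, v⟫_ℝ - L / 2 * s ^ 2 * ‖v‖ ^ 2
  let ψ' : ℝ → ℝ := fun s ↦
    ⟪gradient f (AffineMap.lineMap w z s) - gradient f w, v⟫_ℝ - L * s * ‖v‖ ^ 2
  have hψ : ∀ s, HasDerivAt ψ (ψ' s) s := by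
    intro s
    have := ((hf.hasDerivAt_comp_lineMap w z s).sub
      ((hasDerivAt_id s).mul_const ⟪gradient f w, v⟫_ℝ)).sub
        (((hasDerivAt_pow 2 s).const_mul (L / 2)).mul_const (‖v‖ ^ 2))
    refine this.congr_deriv ?_
    simp only [ψ', inner_sub_left, v]
    ring
  -- The claim is `ψ 1 ≤ ψ 0`, and the Lipschitz bound on the gradient makes `ψ' ≤ 0`.
  obtain ⟨ξ, hξ, hslope⟩ := exists_hasDerivAt_eq_slope ψ ψ' zero_lt_one
    (fun s _ ↦ (hψ s).continuousAt.continuousWithinAt) (fun s _ ↦ hψ s)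
  have hψ'ξ : ψ' ξ ≤ 0 := by
    have hdist : AffineMap.lineMap w z ξ - w = ξ • v := by simp [AffineMap.lineMap_apply, v]
    have := hlip (AffineMap.lineMap w z ξ) w
    rw [hdist, norm_smul, Real.norm_of_nonneg hξ.1.le] at this
    have := real_inner_le_norm (gradient f (AffineMap.lineMap w z ξ) - gradient f w) v
    nlinarith [norm_nonneg v]
  rw [hslope] at hψ'ξ
  simp only [ψ, AffineMap.lineMap_apply_one, AffineMap.lineMap_apply_zero, sub_zero, div_one]
    at hψ'ξ
  rw [bregmanDiv]
  linarith

theorem add_sub_mul_sum_eq_bregmanDiv {ι : Type*} (s : Finset ι) (p : ι → E) {u v : E} {t : ℝ}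
    (ht : t * #s = 2) (huv : u + v = t • ∑ i ∈ s, p i) (w : E) :
    f u + f v - t * ∑ i ∈ s, f (p i)
      = bregmanDiv f u w + bregmanDiv f v w - t * ∑ i ∈ s, bregmanDiv f (p i) w := by
  have hdisp : (u - w) + (v - w) = t • ∑ i ∈ s, (p i - w) := by
    rw [sum_sub_distrib, sum_const, smul_sub, ← huv, ← Nat.cast_smul_eq_nsmul ℝ, smul_smul, ht]
    module
  have hlin : ⟪gradient f w, u - w⟫_ℝ + ⟪gradient f w, v - w⟫_ℝ
      = t * ∑ i ∈ s, ⟪gradient f w, p i - w⟫_ℝ := by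
    rw [← inner_add_right, hdisp, inner_smul_right, inner_sum]
  simp only [bregmanDiv, sum_sub_distrib, sum_const, nsmul_eq_mul]
  linear_combination hlin - f w * ht

variable {L : ℝ} (hconv : ConvexOn ℝ Set.univ f) (hf : Differentiable ℝ f)
  (hlip : ∀ y z, ‖gradient f y - gradient f z‖ ≤ L * ‖y - z‖)
include hconv hf hlip

theorem add_sub_mul_sum_le {ι : Type*} (s : Finset ι) (p : ι → E) {u v : E} {t : ℝ}
    (ht₀ : 0 ≤ t) (ht : t * #s = 2) (huv : u + v = t • ∑ i ∈ s, p i) (w : E) :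
    f u + f v - t * ∑ i ∈ s, f (p i) ≤ L / 2 * ‖u - w‖ ^ 2 + L / 2 * ‖v - w‖ ^ 2 := by
  have hsum : 0 ≤ t * ∑ i ∈ s, bregmanDiv f (p i) w :=
    mul_nonneg ht₀ (sum_nonneg fun i _ ↦ hconv.bregmanDiv_nonneg hf _ w)
  rw [add_sub_mul_sum_eq_bregmanDiv s p ht huv w]
  linarith [bregmanDiv_le_of_lipschitz_gradient hf hlip u w,
    bregmanDiv_le_of_lipschitz_gradient hf hlip v w]

theorem neg_mul_sum_le_add_sub_mul_sum {ι : Type*} (s : Finset ι) (p : ι → E) {u v : E} {t : ℝ}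
    (ht₀ : 0 ≤ t) (ht : t * #s = 2) (huv : u + v = t • ∑ i ∈ s, p i) (w : E) :
    -(t * ∑ i ∈ s, L / 2 * ‖p i - w‖ ^ 2) ≤ f u + f v - t * ∑ i ∈ s, f (p i) := by
  have hsum : t * ∑ i ∈ s, bregmanDiv f (p i) w ≤ t * ∑ i ∈ s, L / 2 * ‖p i - w‖ ^ 2 := by
    gcongr with i
    exact bregmanDiv_le_of_lipschitz_gradient hf hlip _ w
  rw [add_sub_mul_sum_eq_bregmanDiv s p ht huv w]
  linarith [hconv.bregmanDiv_nonneg hf u w, hconv.bregmanDiv_nonneg hf v w]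

end Bregman

section RegularSimplex

variable {E : Type*} [NormedAddCommGroup E] [InnerProductSpace ℝ E] {n : ℕ}
  {x : Fin (n + 1) → E} {c : E}

variable (x) in
noncomputable def facetCentroid : E := (n : ℝ)⁻¹ • ∑ i : Fin n, x i.castSucc

theorem facetCentroid_sub_last (hn : n ≠ 0) (hc : c = (1 / (n + 1 : ℝ)) • ∑ i, x i) :
    facetCentroid x - x (Fin.last n) = (1 + 1 / (n : ℝ)) • (c - x (Fin.last n)) := by
  rw [facetCentroid, hc, Fin.sum_univ_castSucc]
  have : (n : ℝ) ≠ 0 := Nat.cast_ne_zero.mpr hn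
  match_scalars <;> field_simp
  ring

theorem castSucc_sub_facetCentroid (hn : n ≠ 0) (hc : c = (1 / (n + 1 : ℝ)) • ∑ i, x i)
    (i : Fin n) :
    x i.castSucc - facetCentroid x = (x i.castSucc - c) + (n : ℝ)⁻¹ • (x (Fin.last n) - c) := by
  rw [facetCentroid, hc, Fin.sum_univ_castSucc]
  have : (n : ℝ) ≠ 0 := Nat.cast_ne_zero.mpr hn
  match_scalars <;> field_simp <;> ring

theorem norm_castSucc_sub_facetCentroid_sq {δ : ℝ} (hn : n ≠ 0)
    (hc : c = (1 / (n + 1 : ℝ)) • ∑ i, x i) (hrad : ∀ i, ‖x i - c‖ = δ)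
    (hinner : ∀ i j, i ≠ j → ⟪x i - c, x j - c⟫_ℝ = -δ ^ 2 / n) (i : Fin n) :
    ‖x i.castSucc - facetCentroid x‖ ^ 2 = (1 - 1 / (n : ℝ) ^ 2) * δ ^ 2 := by
  have : (n : ℝ) ≠ 0 := Nat.cast_ne_zero.mpr hn
  rw [castSucc_sub_facetCentroid hn hc, norm_add_sq_real, real_inner_smul_right,
    hinner _ _ (Fin.castSucc_lt_last i).ne, norm_smul, hrad, hrad, norm_inv, Real.norm_natCast]
  field_simp
  ring

theorem norm_last_sub_facetCentroid {δ : ℝ} (hn : n ≠ 0)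
    (hc : c = (1 / (n + 1 : ℝ)) • ∑ i, x i) (hrad : ‖x (Fin.last n) - c‖ = δ) :
    ‖x (Fin.last n) - facetCentroid x‖ = (1 + 1 / (n : ℝ)) * δ := by
  rw [norm_sub_rev, facetCentroid_sub_last hn hc, norm_smul, norm_sub_rev, hrad,
    Real.norm_of_nonneg (by positivity)]

theorem reflection_sub_facetCentroid {xr : E} (hn : n ≠ 0)
    (hxr : xr = -x (Fin.last n) + (2 / (n : ℝ)) • ∑ i : Fin n, x i.castSucc) :
    xr - facetCentroid x = facetCentroid x - x (Fin.last n) := by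
  have : (n : ℝ) ≠ 0 := Nat.cast_ne_zero.mpr hn
  rw [hxr, facetCentroid]
  match_scalars <;> field_simp
  norm_num

end RegularSimplex

theorem reflection_error_bound_convex_general (n : ℕ) (hn : 1 ≤ n) (L : ℝ) (hL : 0 < L)
    (f : EuclideanSpace ℝ (Fin n) → ℝ)
    (hconv : ConvexOn ℝ Set.univ f)
    (hdiff : Differentiable ℝ f)
    (hlip : ∀ y z : EuclideanSpace ℝ (Fin n),
      ‖gradient f y - gradient f z‖ ≤ L * ‖y - z‖)
    (x : Fin (n + 1) → EuclideanSpace ℝ (Fin n))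
    (c : EuclideanSpace ℝ (Fin n)) (δ : ℝ)
    (hc : c = (1 / (n + 1 : ℝ)) • ∑ i, x i)
    (hrad : ∀ i, ‖x i - c‖ = δ)
    (hinner : ∀ i j : Fin (n + 1), i ≠ j →
      (inner ℝ (x i - c) (x j - c) : ℝ) = -δ ^ 2 / n)
    (xr : EuclideanSpace ℝ (Fin n))
    (hxr : xr = -x (Fin.last n) + (2 / (n : ℝ)) • ∑ i : Fin n, x i.castSucc) :
    |f xr + f (x (Fin.last n)) - (2 / (n : ℝ)) * ∑ i : Fin n, f (x i.castSucc)|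
      ≤ (1 + 1 / (n : ℝ)) ^ 2 * L * δ ^ 2 := by
  have hn0 : n ≠ 0 := Nat.one_le_iff_ne_zero.mp hn
  set g := facetCentroid x
  have ht : 2 / (n : ℝ) * #(univ : Finset (Fin n)) = 2 := by
    rw [card_univ, Fintype.card_fin]; field_simp
  have huv : xr + x (Fin.last n) = (2 / (n : ℝ)) • ∑ i : Fin n, x i.castSucc := by
    rw [hxr]; abel
  have hlast : ‖x (Fin.last n) - g‖ = (1 + 1 / (n : ℝ)) * δ :=
    norm_last_sub_facetCentroid hn0 hc (hrad _)
  have hrefl : ‖xr - g‖ = (1 + 1 / (n : ℝ)) * δ := by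
    rw [reflection_sub_facetCentroid hn0 hxr, norm_sub_rev, hlast]
  have hfacet : ∀ i : Fin n, ‖x i.castSucc - g‖ ^ 2 = (1 - 1 / (n : ℝ) ^ 2) * δ ^ 2 :=
    norm_castSucc_sub_facetCentroid_sq hn0 hc hrad hinner
  rw [abs_le]
  constructor
  · calc -((1 + 1 / (n : ℝ)) ^ 2 * L * δ ^ 2)
        ≤ -((1 - 1 / (n : ℝ) ^ 2) * L * δ ^ 2) := by
          gcongr
          rw [← one_div_pow]
          nlinarith [one_div_pos.mpr (show (0 : ℝ) < n by positivity)]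
      _ = -(2 / (n : ℝ) * ∑ i : Fin n, L / 2 * ‖x i.castSucc - g‖ ^ 2) := by
          simp_rw [hfacet]
          rw [sum_const, card_univ, Fintype.card_fin, nsmul_eq_mul]
          field_simp
      _ ≤ _ := neg_mul_sum_le_add_sub_mul_sum hconv hdiff hlip _ _ (by positivity) ht huv g
  · calc _ ≤ L / 2 * ‖xr - g‖ ^ 2 + L / 2 * ‖x (Fin.last n) - g‖ ^ 2 :=
          add_sub_mul_sum_le hconv hdiff hlip _ _ (by positivity) ht huv g
      _ = (1 + 1 / (n : ℝ)) ^ 2 * L * δ ^ 2 := by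
          rw [hrefl, hlast]
          ring

/-- Reflection extrapolation error bound (convex case): for a convex `L`-smooth
`f` and a regular simplex of radius `δ`,
`|f(x_r) + f(x_{n+1}) − (2/n)·∑_{i≤n} f(x_i)| ≤ (1 + 1/n)²·L·δ²`. -/
theorem reflection_error_bound_convex (n : ℕ) (hn : 1 ≤ n) (L : ℝ) (hL : 0 < L)
    (f : EuclideanSpace ℝ (Fin n) → ℝ)
    (hconv : ConvexOn ℝ Set.univ f)
    (hdiff : Differentiable ℝ f)
    (hlip : ∀ y z : EuclideanSpace ℝ (Fin n),
      ‖gradient f y - gradient f z‖ ≤ L * ‖y - z‖)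
    (x : Fin (n + 1) → EuclideanSpace ℝ (Fin n))
    (c : EuclideanSpace ℝ (Fin n)) (δ : ℝ) (hδ : 0 < δ)
    (hc : c = (1 / (n + 1 : ℝ)) • ∑ i, x i)
    (hrad : ∀ i, ‖x i - c‖ = δ)
    (hinner : ∀ i j : Fin (n + 1), i ≠ j →
      (inner ℝ (x i - c) (x j - c) : ℝ) = -δ ^ 2 / n)
    (xr : EuclideanSpace ℝ (Fin n))
    (hxr : xr = -x (Fin.last n) + (2 / (n : ℝ)) • ∑ i : Fin n, x i.castSucc) :
    |f xr + f (x (Fin.last n)) - (2 / (n : ℝ)) * ∑ i : Fin n, f (x i.castSucc)|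
      ≤ (1 + 1 / (n : ℝ)) ^ 2 * L * δ ^ 2 :=
  reflection_error_bound_convex_general n hn L hL f hconv hdiff hlip x c δ hc hrad hinner xr hxr
end

section
/- Suppose f : R^n → R is L-smooth with minimum f*, and at iteration k of RSSM the regular simplex has radius δ_k and centroid c_k. If the reflection is rejected, i.e., f(x_r) − f(x_{n+1}) > −((2n+2)/n)·β·L·δ_k², then ((β+1)n + √n/2)·L·δ_k ≥ ‖∇f(c_k)‖. Consequently, if δ_k ≤ ‖∇f(c_k)‖ / (L·((β+1)n + √n/2)), then the reflection is accepted. -/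
/-!
Reflecting the worst vertex through the centroid `c'` of the opposite face is a point symmetry
about `c'`, so in `f(x_r) + f(x_{n+1}) - (2/n) ∑_{i ≤ n} f(x_i)` the constant and linear terms of
the Taylor expansion at `c'` cancel and `L`-smoothness bounds the rest by `((2n+2)/n) L δ²`.
A rejected reflection therefore forces the gap `f(x_{n+1}) - mean_i f(x_i)` below `(1+β) L δ²`.

Conversely the gap controls `‖∇f(c)‖`. The vectors `u_i = x_i - c` of a regular simplex form a
tight frame, `∑ ⟪g, u_i⟫² = ((n+1)/n) δ² ‖g‖²`, while the centred values `f(x_i) - mean` sum to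
zero and are at most the gap `m`, so their squares sum to at most `n(n+1) m²`. Up to the Taylor
remainders at `c`, the centred values are the linear terms `⟪∇f(c), u_i⟫`, so comparing `ℓ²` norms
(Cauchy–Schwarz) gives `gap ≥ (δ/n)(‖∇f(c)‖ - (√n/2) L δ)`.
-/

open scoped RealInnerProductSpace
open Finset Module

section

variable {E : Type*} [NormedAddCommGroup E] [InnerProductSpace ℝ E] {ι : Type*} [Fintype ι]

theorem abs_sub_sub_inner_gradient_le [CompleteSpace E] {f : E → ℝ} {L : ℝ}
    (hf : Differentiable ℝ f) {z : E}
    (hlip : ∀ y, ‖gradient f y - gradient f z‖ ≤ L * ‖y - z‖) (y : E) :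
    |f y - f z - ⟪gradient f z, y - z⟫| ≤ L / 2 * ‖y - z‖ ^ 2 := by
  set v := y - z
  let φ : ℝ → ℝ := fun t => f (z + t • v) - f z - t * ⟪gradient f z, v⟫
  have hφ : ∀ t, HasDerivAt φ ⟪gradient f (z + t • v) - gradient f z, v⟫ t := fun t => by
    have hline : HasDerivAt (fun t : ℝ => z + t • v) v t := by
      simpa using ((hasDerivAt_id t).smul_const v).const_add z
    have hfl := ((hf _).hasGradientAt.hasFDerivAt).comp_hasDerivAt t hline
    have := ((hfl.sub_const (f z)).sub ((hasDerivAt_id t).mul_const ⟪gradient f z, v⟫))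
    refine HasDerivAt.congr_deriv (f := φ) this ?_
    simp [inner_sub_left]
  have hbound : ∀ t ∈ Set.Ico (0 : ℝ) 1,
      ‖⟪gradient f (z + t • v) - gradient f z, v⟫‖ ≤ L * ‖v‖ ^ 2 * t := fun t ht => by
    calc ‖⟪gradient f (z + t • v) - gradient f z, v⟫‖
        ≤ ‖gradient f (z + t • v) - gradient f z‖ * ‖v‖ := norm_inner_le_norm _ _
      _ ≤ L * ‖t • v‖ * ‖v‖ := by
          gcongr
          simpa using hlip (z + t • v)
      _ = L * ‖v‖ ^ 2 * t := by rw [norm_smul, Real.norm_of_nonneg ht.1]; ring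
  have hB : ∀ t, HasDerivAt (fun t => L / 2 * ‖v‖ ^ 2 * t ^ 2) (L * ‖v‖ ^ 2 * t) t := fun t =>
    ((hasDerivAt_pow 2 t).const_mul (L / 2 * ‖v‖ ^ 2)).congr_deriv (by ring)
  have := image_norm_le_of_norm_deriv_right_le_deriv_boundary
    (fun t _ => (hφ t).continuousAt.continuousWithinAt) (fun t _ => (hφ t).hasDerivWithinAt)
    (by simp [φ]) hB hbound (Set.right_mem_Icc.2 zero_le_one)
  simpa [φ, v] using this

theorem sum_inner_smul_of_gram {u : ι → E} {a b : ℝ} (hself : ∀ i, ⟪u i, u i⟫ = a)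
    (hoff : ∀ i j, i ≠ j → ⟪u i, u j⟫ = b) {M : Type*} [AddCommGroup M] [Module ℝ M]
    (w : ι → M) (j : ι) : ∑ i, ⟪u i, u j⟫ • w i = (a - b) • w j + b • ∑ i, w i := by
  classical
  have hrest : ∑ i ∈ univ.erase j, ⟪u i, u j⟫ • w i = b • (∑ i, w i - w j) := by
    rw [← sum_erase_eq_sub (mem_univ j), smul_sum]
    exact sum_congr rfl fun i hi => by rw [hoff i j (ne_of_mem_erase hi)]
  rw [← add_sum_erase _ _ (mem_univ j), hrest, hself]
  module

theorem eq_of_sum_smul_eq_zero_of_gram {u : ι → E} {a b : ℝ} (hself : ∀ i, ⟪u i, u i⟫ = a)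
    (hoff : ∀ i j, i ≠ j → ⟪u i, u j⟫ = b) (hab : a ≠ b) {t : ι → ℝ}
    (ht : ∑ i, t i • u i = 0) (j k : ι) : t j = t k := by
  have hcoord : ∀ j, (a - b) * t j + b * ∑ i, t i = 0 := fun j => by
    have := sum_inner_smul_of_gram hself hoff t j
    simp only [smul_eq_mul] at this
    rw [← this, ← inner_zero_right (u j), ← ht, inner_sum]
    exact sum_congr rfl fun i _ => by rw [real_inner_smul_right, real_inner_comm, mul_comm]
  have := (hcoord j).trans (hcoord k).symm
  exact mul_left_cancel₀ (sub_ne_zero.2 hab) (by linarith)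

theorem linearIndependent_castSucc_of_gram {n : ℕ} {u : Fin (n + 1) → E} {a b : ℝ}
    (hself : ∀ i, ⟪u i, u i⟫ = a) (hoff : ∀ i j, i ≠ j → ⟪u i, u j⟫ = b) (hab : a ≠ b) :
    LinearIndependent ℝ fun i : Fin n => u i.castSucc := by
  rw [Fintype.linearIndependent_iff]
  intro t ht i
  have hsnoc : ∑ k, (Fin.snoc t 0 : Fin (n + 1) → ℝ) k • u k = 0 := by
    simpa [Fin.sum_univ_castSucc] using ht
  simpa using eq_of_sum_smul_eq_zero_of_gram hself hoff hab hsnoc i.castSucc (Fin.last n)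

theorem sum_inner_sq_eq_of_gram [FiniteDimensional ℝ E] {n : ℕ} (hdim : finrank ℝ E = n)
    {u : Fin (n + 1) → E} {a b : ℝ} (hsum : ∑ i, u i = 0) (hself : ∀ i, ⟪u i, u i⟫ = a)
    (hoff : ∀ i j, i ≠ j → ⟪u i, u j⟫ = b) (hab : a ≠ b) (g : E) :
    ∑ i, ⟪g, u i⟫ ^ 2 = (a - b) * ‖g‖ ^ 2 := by
  have hspan : Submodule.span ℝ (Set.range fun i : Fin n => u i.castSucc) = ⊤ :=
    (linearIndependent_castSucc_of_gram hself hoff hab).span_eq_top_of_card_eq_finrank'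
      (by simp [hdim])
  let S : E →ₗ[ℝ] E := ∑ i, (innerₛₗ ℝ (u i)).smulRight (u i)
  have hS : S = (a - b) • LinearMap.id := LinearMap.ext_on_range hspan fun j => by
    simp [S, sum_inner_smul_of_gram hself hoff u, hsum]
  calc ∑ i, ⟪g, u i⟫ ^ 2 = ⟪g, S g⟫ := by
        simp [S, inner_sum, real_inner_smul_right, real_inner_comm, sq]
    _ = (a - b) * ‖g‖ ^ 2 := by
        rw [hS]; simp [real_inner_smul_right]

theorem sum_sq_le_of_sum_eq_zero {b : ι → ℝ} (hsum : ∑ i, b i = 0)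
    {M : ℝ} (hM : ∀ i, b i ≤ M) :
    ∑ i, b i ^ 2 ≤ (Fintype.card ι - 1) * Fintype.card ι * M ^ 2 := by
  classical
  set k : ℝ := (Fintype.card ι : ℝ)
  have hlower : ∀ i, -((k - 1) * M) ≤ b i := fun i => by
    have hrest : ∑ j ∈ univ.erase i, b j ≤ (k - 1) * M := by
      have hcard : ((univ.erase i).card : ℝ) = k - 1 := by
        rw [card_erase_of_mem (mem_univ i), card_univ, Nat.cast_pred (Fintype.card_pos_iff.2 ⟨i⟩)]
      have := sum_le_card_nsmul (univ.erase i) b M fun j _ => hM j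
      rwa [nsmul_eq_mul, hcard] at this
    linarith [add_sum_erase univ b (mem_univ i)]
  have hpoint : ∀ i, b i ^ 2 ≤ (k - 1) * M ^ 2 + (2 - k) * M * b i := fun i => by
    nlinarith [mul_nonneg (sub_nonneg.2 (hM i)) (neg_le_iff_add_nonneg.1 (hlower i))]
  calc ∑ i, b i ^ 2 ≤ ∑ i, ((k - 1) * M ^ 2 + (2 - k) * M * b i) := sum_le_sum fun i _ => hpoint i
    _ = (k - 1) * k * M ^ 2 := by
        simp only [sum_add_distrib, ← mul_sum, hsum, sum_const, card_univ, nsmul_eq_mul]; ring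

theorem sqrt_sum_sq_le_add_of_sum_sq_eq {a b e : ι → ℝ}
    (h : ∑ i, a i ^ 2 = ∑ i, a i * (b i - e i)) :
    √(∑ i, a i ^ 2) ≤ √(∑ i, b i ^ 2) + √(∑ i, e i ^ 2) := by
  set A := √(∑ i, a i ^ 2)
  have hb := Real.sum_mul_le_sqrt_mul_sqrt univ a b
  have he := Real.sum_mul_le_sqrt_mul_sqrt univ a (-e)
  simp only [Pi.neg_apply, neg_sq, mul_neg, sum_neg_distrib] at he
  have hsq : A * A ≤ A * (√(∑ i, b i ^ 2) + √(∑ i, e i ^ 2)) := by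
    rw [Real.mul_self_sqrt (sum_nonneg fun i _ => sq_nonneg _), h]
    simp only [mul_sub, sum_sub_distrib]
    linarith
  nlinarith [Real.sqrt_nonneg (∑ i, a i ^ 2), Real.sqrt_nonneg (∑ i, b i ^ 2),
    Real.sqrt_nonneg (∑ i, e i ^ 2)]

theorem sub_sqrt_mul_div_le_max_sub_mean {n : ℕ} (hn : n ≠ 0) {v a : Fin (n + 1) → ℝ}
    {k A K : ℝ} (hsuma : ∑ i, a i = 0) (hsq : ∑ i, a i ^ 2 = (n + 1) / n * A ^ 2)
    (hK : ∀ i, |v i - k - a i| ≤ K) (hmax : ∀ i, v i ≤ v (Fin.last n)) :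
    (A - √n * K) / n ≤ v (Fin.last n) - (∑ i, v i) / (n + 1) := by
  have hn0 : (0 : ℝ) < n := by positivity
  set e : Fin (n + 1) → ℝ := fun i => v i - k - a i
  set b : Fin (n + 1) → ℝ := fun i => v i - (∑ j, v j) / (n + 1)
  have hsumb : ∑ i, b i = 0 := by
    simp only [b, sum_sub_distrib, sum_const, card_univ, Fintype.card_fin, nsmul_eq_mul]
    push_cast
    field_simp
    ring
  have hab : ∑ i, a i ^ 2 = ∑ i, a i * (b i - e i) := by
    have hbe : ∀ i, b i - e i = a i + (k - (∑ j, v j) / (n + 1)) := fun i => by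
      simp only [b, e]; ring
    simp only [hbe, mul_add, sum_add_distrib, ← sum_mul, hsuma, zero_mul, add_zero, sq]
  have hbmax : ∀ i, b i ≤ b (Fin.last n) := fun i => by simp only [b]; linarith [hmax i]
  obtain ⟨i₀, -, hi₀⟩ := exists_le_of_sum_le univ_nonempty
    ((sum_const_zero).trans_le hsumb.ge : ∑ _i : Fin (n + 1), (0 : ℝ) ≤ ∑ i, b i)
  have hm : 0 ≤ b (Fin.last n) := hi₀.trans (hbmax i₀)
  set r := √(n : ℝ)
  set s := √((n : ℝ) + 1)
  have hr : 0 < r := Real.sqrt_pos.2 hn0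
  have hs : 0 < s := Real.sqrt_pos.2 (by positivity)
  have hr2 : r ^ 2 = n := Real.sq_sqrt hn0.le
  have hs2 : s ^ 2 = n + 1 := Real.sq_sqrt (by positivity)
  have ha : s * (A / r) ≤ √(∑ i, a i ^ 2) := by
    refine Real.le_sqrt_of_sq_le (le_of_eq ?_)
    rw [hsq, mul_pow, div_pow, hs2, hr2]
    ring
  have hb : √(∑ i, b i ^ 2) ≤ s * (r * b (Fin.last n)) := by
    refine Real.sqrt_le_iff.2 ⟨by positivity, ?_⟩
    refine (sum_sq_le_of_sum_eq_zero hsumb hbmax).trans_eq ?_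
    simp only [Fintype.card_fin]
    push_cast
    rw [mul_pow, mul_pow, hr2, hs2]
    ring
  have he : √(∑ i, e i ^ 2) ≤ s * K := by
    refine Real.sqrt_le_iff.2 ⟨mul_nonneg hs.le ((abs_nonneg _).trans (hK 0)), ?_⟩
    calc ∑ i, e i ^ 2 ≤ ∑ _i : Fin (n + 1), K ^ 2 := sum_le_sum fun i _ => by
          rw [← sq_abs]; exact pow_le_pow_left₀ (abs_nonneg _) (hK i) 2
      _ = (s * K) ^ 2 := by simp [mul_pow, hs2]
  have key : s * (A / r) ≤ s * (r * b (Fin.last n) + K) := by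
    rw [mul_add]
    exact (ha.trans (sqrt_sum_sq_le_add_of_sum_sq_eq hab)).trans (add_le_add hb he)
  have hcancel := le_of_mul_le_mul_left key hs
  calc (A - r * K) / n = (A / r - K) / r := by rw [← hr2]; field_simp
    _ ≤ b (Fin.last n) := by rw [div_le_iff₀ hr]; linarith

theorem abs_reflect_add_sub_mean_le {f : E → ℝ} {L : ℝ} {c g : E}
    (hquad : ∀ y, |f y - f c - ⟪g, y - c⟫| ≤ L / 2 * ‖y - c‖ ^ 2) {n : ℕ} (hn : n ≠ 0)
    (p : Fin n → E) (hp : ∑ i, p i = (n : ℝ) • c) (q : E) :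
    |f (2 • c - q) + f q - 2 / n * ∑ i, f (p i)|
      ≤ L * (‖q - c‖ ^ 2 + (∑ i, ‖p i - c‖ ^ 2) / n) := by
  set R : E → ℝ := fun y => f y - f c - ⟪g, y - c⟫
  have hface : ∑ i, ⟪g, p i - c⟫ = 0 := by
    simp [← inner_sum, sum_sub_distrib, hp, ← Nat.cast_smul_eq_nsmul ℝ]
  have hreflect : ⟪g, 2 • c - q - c⟫ = -⟪g, q - c⟫ := by
    rw [← inner_neg_right]; congr 1; module
  have hremainder : f (2 • c - q) + f q - 2 / n * ∑ i, f (p i)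
      = R (2 • c - q) + R q - 2 / n * ∑ i, R (p i) := by
    simp only [R, sum_sub_distrib, hface, hreflect, sum_const, card_univ, Fintype.card_fin,
      nsmul_eq_mul]
    field_simp
    ring
  have hnorm : ‖2 • c - q - c‖ = ‖q - c‖ := by
    rw [← norm_neg]; congr 1; module
  calc |f (2 • c - q) + f q - 2 / n * ∑ i, f (p i)|
      ≤ |R (2 • c - q)| + |R q| + 2 / n * ∑ i, |R (p i)| := by
        rw [hremainder]
        refine (abs_sub _ _).trans (add_le_add (abs_add_le _ _) ?_)
        rw [abs_mul, abs_of_nonneg (by positivity)]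
        gcongr
        exact abs_sum_le_sum_abs _ _
    _ ≤ L / 2 * ‖q - c‖ ^ 2 + L / 2 * ‖q - c‖ ^ 2 + 2 / n * ∑ i, L / 2 * ‖p i - c‖ ^ 2 := by
        gcongr with i
        · exact hnorm ▸ hquad _
        · exact hquad q
        · exact hquad (p i)
    _ = L * (‖q - c‖ ^ 2 + (∑ i, ‖p i - c‖ ^ 2) / n) := by
        rw [← mul_sum]; ring

structure IsRegularSimplex {n : ℕ} (x : Fin (n + 1) → E) (c : E) (δ : ℝ) : Prop where
  centroid_eq : c = (1 / (n + 1 : ℝ)) • ∑ i, x i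
  norm_sub_centroid : ∀ i, ‖x i - c‖ = δ
  inner_sub_centroid : ∀ i j, i ≠ j → ⟪x i - c, x j - c⟫ = -δ ^ 2 / n

namespace IsRegularSimplex

variable {n : ℕ} {x : Fin (n + 1) → E} {c : E} {δ : ℝ}

theorem sum_sub_centroid (h : IsRegularSimplex x c δ) : ∑ i, (x i - c) = 0 := by
  rw [sum_sub_distrib, h.centroid_eq, sum_const, card_univ, Fintype.card_fin,
    ← Nat.cast_smul_eq_nsmul ℝ, smul_smul]
  push_cast
  rw [mul_one_div_cancel (by positivity), one_smul, sub_self]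

theorem inner_sub_centroid_self (h : IsRegularSimplex x c δ) (i : Fin (n + 1)) :
    ⟪x i - c, x i - c⟫ = δ ^ 2 := by
  rw [real_inner_self_eq_norm_sq, h.norm_sub_centroid]

theorem abs_reflect_add_sub_mean_le [CompleteSpace E] (h : IsRegularSimplex x c δ) (hn : n ≠ 0)
    {f : E → ℝ} {L : ℝ}
    (hquad : ∀ z y, |f y - f z - ⟪gradient f z, y - z⟫| ≤ L / 2 * ‖y - z‖ ^ 2) :
    |f (-x (Fin.last n) + (2 / (n : ℝ)) • ∑ i : Fin n, x i.castSucc) + f (x (Fin.last n))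
        - 2 / n * ∑ i : Fin n, f (x i.castSucc)| ≤ (2 * n + 2) / n * L * δ ^ 2 := by
  have hn' : (n : ℝ) ≠ 0 := Nat.cast_ne_zero.2 hn
  -- the centroid of the face opposite to the last vertex
  set c' := c - (n : ℝ)⁻¹ • (x (Fin.last n) - c) with hc'
  have hface : ∑ i : Fin n, x i.castSucc = (n : ℝ) • c' := by
    have hsum := h.sum_sub_centroid
    rw [Fin.sum_univ_castSucc, sum_sub_distrib, sum_const, card_univ, Fintype.card_fin,
      ← Nat.cast_smul_eq_nsmul ℝ] at hsum
    rw [hc', smul_sub, smul_smul, mul_inv_cancel₀ hn', one_smul]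
    linear_combination (norm := module) hsum
  have hxr : -x (Fin.last n) + (2 / (n : ℝ)) • ∑ i : Fin n, x i.castSucc
      = 2 • c' - x (Fin.last n) := by
    rw [hface, smul_smul, div_mul_cancel₀ _ hn']; module
  have hlast : ‖x (Fin.last n) - c'‖ ^ 2 = ((1 + (n : ℝ)⁻¹) * δ) ^ 2 := by
    rw [show x (Fin.last n) - c' = (1 + (n : ℝ)⁻¹) • (x (Fin.last n) - c) by module,
      norm_smul, Real.norm_of_nonneg (by positivity), h.norm_sub_centroid]
  have hrest : ∀ i : Fin n, ‖x i.castSucc - c'‖ ^ 2 = δ ^ 2 * (1 - 1 / n ^ 2) := fun i => by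
    rw [show x i.castSucc - c' = (x i.castSucc - c) + (n : ℝ)⁻¹ • (x (Fin.last n) - c) by module,
      norm_add_sq_real, norm_smul, real_inner_smul_right,
      h.inner_sub_centroid _ _ (Fin.castSucc_lt_last i).ne, h.norm_sub_centroid,
      h.norm_sub_centroid, norm_inv, Real.norm_natCast]
    field_simp
    ring
  rw [hxr]
  refine (_root_.abs_reflect_add_sub_mean_le (hquad c') hn _ hface _).trans_eq ?_
  simp only [hlast, hrest, sum_const, card_univ, Fintype.card_fin, nsmul_eq_mul]
  field_simp
  ring

theorem le_max_sub_mean [FiniteDimensional ℝ E] (h : IsRegularSimplex x c δ)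
    (hdim : finrank ℝ E = n) (hn : n ≠ 0) (hδ : 0 < δ) {f : E → ℝ} {L : ℝ} {g : E}
    (hquad : ∀ y, |f y - f c - ⟪g, y - c⟫| ≤ L / 2 * ‖y - c‖ ^ 2)
    (hmax : ∀ i, f (x i) ≤ f (x (Fin.last n))) :
    δ / n * (‖g‖ - √n / 2 * L * δ) ≤ f (x (Fin.last n)) - (∑ i, f (x i)) / (n + 1) := by
  have hsum : ∑ i, ⟪g, x i - c⟫ = 0 := by rw [← inner_sum, h.sum_sub_centroid, inner_zero_right]
  have hoff : -δ ^ 2 / n < δ ^ 2 :=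
    (div_neg_of_neg_of_pos (neg_neg_of_pos (by positivity)) (by positivity)).trans (by positivity)
  have hframe : ∑ i, ⟪g, x i - c⟫ ^ 2 = (n + 1) / n * (δ * ‖g‖) ^ 2 := by
    rw [sum_inner_sq_eq_of_gram hdim h.sum_sub_centroid h.inner_sub_centroid_self
      h.inner_sub_centroid hoff.ne' g]
    field_simp
    ring
  have hremainder : ∀ i, |f (x i) - f c - ⟪g, x i - c⟫| ≤ L / 2 * δ ^ 2 := fun i => by
    simpa [h.norm_sub_centroid] using hquad (x i)
  calc δ / n * (‖g‖ - √n / 2 * L * δ) = (δ * ‖g‖ - √n * (L / 2 * δ ^ 2)) / n := by ring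
    _ ≤ _ := sub_sqrt_mul_div_le_max_sub_mean hn hsum hframe hremainder hmax

end IsRegularSimplex

end

theorem sufficient_condition_reflection_general (n : ℕ) (hn : 1 ≤ n) (L β : ℝ)
    (f : EuclideanSpace ℝ (Fin n) → ℝ)
    (hdiff : Differentiable ℝ f)
    (hlip : ∀ y z : EuclideanSpace ℝ (Fin n),
      ‖gradient f y - gradient f z‖ ≤ L * ‖y - z‖)
    (x : Fin (n + 1) → EuclideanSpace ℝ (Fin n))
    (c : EuclideanSpace ℝ (Fin n)) (δ : ℝ) (hδ : 0 < δ)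
    (hc : c = (1 / (n + 1 : ℝ)) • ∑ i, x i)
    (hrad : ∀ i, ‖x i - c‖ = δ)
    (hinner : ∀ i j : Fin (n + 1), i ≠ j →
      (inner ℝ (x i - c) (x j - c) : ℝ) = -δ ^ 2 / n)
    (hsorted : ∀ i j : Fin (n + 1), i ≤ j → f (x i) ≤ f (x j))
    (xr : EuclideanSpace ℝ (Fin n))
    (hxr : xr = -x (Fin.last n) + (2 / (n : ℝ)) • ∑ i : Fin n, x i.castSucc) :
    (f xr - f (x (Fin.last n)) > -((2 * n + 2 : ℝ) / n) * β * L * δ ^ 2 →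
      ((β + 1) * n + Real.sqrt n / 2) * L * δ ≥ ‖gradient f c‖) ∧
    (δ ≤ ‖gradient f c‖ / (L * ((β + 1) * n + Real.sqrt n / 2)) →
      f xr - f (x (Fin.last n)) ≤ -((2 * n + 2 : ℝ) / n) * β * L * δ ^ 2) := by
  have hn0 : n ≠ 0 := Nat.one_le_iff_ne_zero.1 hn
  have hnpos : (0 : ℝ) < n := by positivity
  have hsimplex : IsRegularSimplex x c δ := ⟨hc, hrad, hinner⟩
  have hquad z y := abs_sub_sub_inner_gradient_le hdiff (fun y => hlip y z) y
  have hext := (abs_le.1 (hsimplex.abs_reflect_add_sub_mean_le hn0 hquad)).2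
  have hgap := hsimplex.le_max_sub_mean (by simp) hn0 hδ (hquad c)
    fun i => hsorted i _ (Fin.le_last i)
  rw [← hxr] at hext
  rw [Fin.sum_univ_castSucc] at hgap
  have hrejected : f xr - f (x (Fin.last n)) > -((2 * n + 2 : ℝ) / n) * β * L * δ ^ 2 →
      ‖gradient f c‖ < ((β + 1) * n + √n / 2) * L * δ := by
    intro hrej
    set gap := f (x (Fin.last n)) - (∑ i : Fin n, f (x i.castSucc) + f (x (Fin.last n))) / (n + 1)
      with hgap_def
    have hscaled : (2 * n + 2) / n * gap
        = 2 * f (x (Fin.last n)) - 2 / n * ∑ i : Fin n, f (x i.castSucc) := by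
      rw [hgap_def]; field_simp; ring
    have hgap_lt : gap < (1 + β) * L * δ ^ 2 :=
      lt_of_mul_lt_mul_left (by linarith :
        (2 * n + 2) / n * gap < (2 * n + 2) / n * ((1 + β) * L * δ ^ 2)) (by positivity)
    have := hgap.trans_lt hgap_lt
    rw [div_mul_eq_mul_div, div_lt_iff₀ hnpos] at this
    nlinarith
  refine ⟨fun hrej => (hrejected hrej).le, fun hsmall => ?_⟩
  by_contra hacc
  have hlt := hrejected (lt_of_not_ge hacc)
  have hpos : 0 < L * ((β + 1) * n + √n / 2) := by nlinarith [norm_nonneg (gradient f c)]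
  rw [le_div_iff₀ hpos] at hsmall
  linarith

/-- Sufficient condition for reflection in RSSM (nonconvex case): if the
reflection is rejected then `((β+1)n + √n/2)·L·δ ≥ ‖∇f(c)‖`; consequently, if
`δ ≤ ‖∇f(c)‖/(L((β+1)n + √n/2))` then the reflection is accepted. -/
theorem sufficient_condition_reflection (n : ℕ) (hn : 1 ≤ n) (L β : ℝ)
    (hL : 0 < L) (hβ : 0 < β)
    (f : EuclideanSpace ℝ (Fin n) → ℝ)
    (hdiff : Differentiable ℝ f)
    (hlip : ∀ y z : EuclideanSpace ℝ (Fin n),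
      ‖gradient f y - gradient f z‖ ≤ L * ‖y - z‖)
    (fstar : ℝ) (hmin : ∀ y, fstar ≤ f y)
    (x : Fin (n + 1) → EuclideanSpace ℝ (Fin n))
    (c : EuclideanSpace ℝ (Fin n)) (δ : ℝ) (hδ : 0 < δ)
    (hc : c = (1 / (n + 1 : ℝ)) • ∑ i, x i)
    (hrad : ∀ i, ‖x i - c‖ = δ)
    (hinner : ∀ i j : Fin (n + 1), i ≠ j →
      (inner ℝ (x i - c) (x j - c) : ℝ) = -δ ^ 2 / n)
    (hsorted : ∀ i j : Fin (n + 1), i ≤ j → f (x i) ≤ f (x j))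
    (xr : EuclideanSpace ℝ (Fin n))
    (hxr : xr = -x (Fin.last n) + (2 / (n : ℝ)) • ∑ i : Fin n, x i.castSucc) :
    (f xr - f (x (Fin.last n)) > -((2 * n + 2 : ℝ) / n) * β * L * δ ^ 2 →
      ((β + 1) * n + Real.sqrt n / 2) * L * δ ≥ ‖gradient f c‖) ∧
    (δ ≤ ‖gradient f c‖ / (L * ((β + 1) * n + Real.sqrt n / 2)) →
      f xr - f (x (Fin.last n)) ≤ -((2 * n + 2 : ℝ) / n) * β * L * δ ^ 2) :=
  sufficient_condition_reflection_general n hn L β f hdiff hlip x c δ hδ hc hrad hinner hsorted xr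
    hxr
end

section
/- Suppose f : R^n → R is L-smooth and a shrinking step replaces x_i by γ·x_i + (1−γ)·x_1 for i = 2,...,n+1, where the simplex is regular with radius δ and γ ∈ (0,1). Then the sum of function values increases by at most L·γ(1−γ)·(n+1)·δ²: Σ f(x_i^{new}) ≤ Σ f(x_i) + (n+1)·L·γ(1−γ)·δ², provided f(x_1) ≤ f(x_i) for all i. -/
/-!
A function with `L`-Lipschitz gradient is `(-L)`-strongly convex: along any line the
derivative of `t ↦ f (a + t • v) + L ‖v‖² t² / 2` is monotone, so this function is convex.
Hence moving a vertex `x i` of the simplex towards the best vertex `x 0` increases `f` by at most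
`L γ (1 - γ) ‖x i - x 0‖² / 2`, the linear interpolation term being at most `f (x i)` because
`f (x 0) ≤ f (x i)`. In a regular simplex of radius `δ` every edge has squared length
`2 (1 + 1/n) δ²`, and summing over the `n` moved vertices gives the bound.
-/

open Set Finset
open scoped RealInnerProductSpace

section LipschitzGradient

variable {E : Type*} [NormedAddCommGroup E] [InnerProductSpace ℝ E] [CompleteSpace E]
  {f : E → ℝ} {L : ℝ}

theorem DifferentiableAt.hasDerivAt_comp_add_smul {a v : E} {t : ℝ}
    (hf : DifferentiableAt ℝ f (a + t • v)) :
    HasDerivAt (fun s : ℝ => f (a + s • v)) ⟪gradient f (a + t • v), v⟫ t := by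
  have hline : HasDerivAt (fun s : ℝ => a + s • v) v t := by
    simpa using ((hasDerivAt_id t).smul_const v).const_add a
  exact (hf.hasGradientAt.hasFDerivAt.comp_hasDerivAt t hline).congr_deriv
    (InnerProductSpace.toDual_apply_apply ..)

theorem convexOn_univ_comp_add_smul_add_sq_of_lipschitz_gradient (hdiff : Differentiable ℝ f)
    (hlip : ∀ y z : E, ‖gradient f y - gradient f z‖ ≤ L * ‖y - z‖) (a v : E) :
    ConvexOn ℝ univ fun t : ℝ => f (a + t • v) + L * ‖v‖ ^ 2 / 2 * t ^ 2 := by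
  have hderiv : ∀ t : ℝ, HasDerivAt (fun t : ℝ => f (a + t • v) + L * ‖v‖ ^ 2 / 2 * t ^ 2)
      (⟪gradient f (a + t • v), v⟫ + L * ‖v‖ ^ 2 * t) t := fun t => by
    refine ((hdiff _).hasDerivAt_comp_add_smul.add
      ((hasDerivAt_pow 2 t).const_mul (L * ‖v‖ ^ 2 / 2))).congr_deriv ?_
    push_cast
    ring
  refine Monotone.convexOn_univ_of_deriv (fun t => (hderiv t).differentiableAt) ?_
  intro s t hst
  simp only [(hderiv _).deriv]
  have hgrad : ‖gradient f (a + s • v) - gradient f (a + t • v)‖ ≤ L * ((t - s) * ‖v‖) := by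
    calc _ ≤ L * ‖(a + s • v) - (a + t • v)‖ := hlip _ _
      _ = L * ((t - s) * ‖v‖) := by
        rw [add_sub_add_left_eq_sub, ← sub_smul, norm_smul, Real.norm_eq_abs,
          abs_of_nonpos (sub_nonpos.mpr hst), neg_sub]
  have hinner : ⟪gradient f (a + s • v) - gradient f (a + t • v), v⟫
      ≤ L * ((t - s) * ‖v‖) * ‖v‖ :=
    (real_inner_le_norm _ _).trans (mul_le_mul_of_nonneg_right hgrad (norm_nonneg v))
  rw [inner_sub_left] at hinner
  linarith

theorem strongConvexOn_univ_neg_of_lipschitz_gradient (hdiff : Differentiable ℝ f)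
    (hlip : ∀ y z : E, ‖gradient f y - gradient f z‖ ≤ L * ‖y - z‖) :
    StrongConvexOn univ (-L) f := by
  refine ⟨convex_univ, fun x _ y _ α β hα hβ hαβ => ?_⟩
  have hconv := (convexOn_univ_comp_add_smul_add_sq_of_lipschitz_gradient hdiff hlip y
    (x - y)).2 (mem_univ 1) (mem_univ 0) hα hβ hαβ
  obtain rfl : β = 1 - α := eq_sub_of_add_eq' hαβ
  have hpoint : y + α • (x - y) = α • x + (1 - α) • y := by module
  simp only [smul_eq_mul, mul_one, mul_zero, add_zero, one_smul, zero_smul] at hconv ⊢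
  rw [hpoint, add_sub_cancel] at hconv
  linarith

end LipschitzGradient

theorem StrongConvexOn.apply_shrink_le {E : Type*} [NormedAddCommGroup E] [NormedSpace ℝ E]
    {f : E → ℝ} {L γ : ℝ} (hf : StrongConvexOn univ (-L) f) {a b : E} (hab : f a ≤ f b)
    (hγ0 : 0 ≤ γ) (hγ1 : γ ≤ 1) :
    f (γ • b + (1 - γ) • a) ≤ f b + L / 2 * (γ * (1 - γ)) * ‖b - a‖ ^ 2 := by
  have hconv := hf.2 (mem_univ b) (mem_univ a) hγ0 (sub_nonneg.mpr hγ1) (add_sub_cancel γ 1)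
  have hbest := mul_le_mul_of_nonneg_left hab (sub_nonneg.mpr hγ1)
  simp only [smul_eq_mul] at hconv
  linarith

theorem norm_sub_sq_of_norm_sub_eq_of_inner_eq {E : Type*} [NormedAddCommGroup E]
    [InnerProductSpace ℝ E] {c u w : E} {δ r : ℝ} (hu : ‖u - c‖ = δ) (hw : ‖w - c‖ = δ)
    (huw : ⟪u - c, w - c⟫ = -δ ^ 2 / r) :
    ‖u - w‖ ^ 2 = 2 * δ ^ 2 + 2 * δ ^ 2 / r := by
  rw [← sub_sub_sub_cancel_right u w c, norm_sub_sq_real, hu, hw, huw]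
  ring

theorem shrink_increase_bound_general (n : ℕ) (hn : 1 ≤ n) (L : ℝ)
    (f : EuclideanSpace ℝ (Fin n) → ℝ)
    (hdiff : Differentiable ℝ f)
    (hlip : ∀ y z : EuclideanSpace ℝ (Fin n),
      ‖gradient f y - gradient f z‖ ≤ L * ‖y - z‖)
    (x : Fin (n + 1) → EuclideanSpace ℝ (Fin n))
    (c : EuclideanSpace ℝ (Fin n)) (δ : ℝ)
    (hrad : ∀ i, ‖x i - c‖ = δ)
    (hinner : ∀ i j : Fin (n + 1), i ≠ j →
      (inner ℝ (x i - c) (x j - c) : ℝ) = -δ ^ 2 / n)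
    (hbest : ∀ i, f (x 0) ≤ f (x i))
    (γ : ℝ) (hγ : γ ∈ Set.Ioo (0 : ℝ) 1)
    (y : Fin (n + 1) → EuclideanSpace ℝ (Fin n))
    (hy : ∀ i : Fin (n + 1), y i = if i = 0 then x 0 else γ • x i + (1 - γ) • x 0) :
    ∑ i, f (y i) ≤ ∑ i, f (x i) + (n + 1 : ℝ) * L * (γ * (1 - γ)) * δ ^ 2 := by
  have hf := strongConvexOn_univ_neg_of_lipschitz_gradient hdiff hlip
  have hstep (i : Fin n) :
      f (y i.succ) ≤ f (x i.succ) + L / 2 * (γ * (1 - γ)) * (2 * δ ^ 2 + 2 * δ ^ 2 / n) := by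
    rw [hy, if_neg i.succ_ne_zero, ← norm_sub_sq_of_norm_sub_eq_of_inner_eq (hrad _) (hrad 0)
      (hinner _ 0 i.succ_ne_zero)]
    exact hf.apply_shrink_le (hbest _) hγ.1.le hγ.2.le
  set K := L / 2 * (γ * (1 - γ)) * (2 * δ ^ 2 + 2 * δ ^ 2 / n) with hK
  have hn0 : (n : ℝ) ≠ 0 := by exact_mod_cast (by omega : n ≠ 0)
  calc ∑ i, f (y i) = f (x 0) + ∑ i : Fin n, f (y i.succ) := by
        rw [Fin.sum_univ_succ, hy, if_pos rfl]
    _ ≤ f (x 0) + ∑ i : Fin n, (f (x i.succ) + K) := by gcongr with i; exact hstep i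
    _ = ∑ i, f (x i) + n * K := by
        rw [Fin.sum_univ_succ, sum_add_distrib, sum_const, card_univ, Fintype.card_fin,
          nsmul_eq_mul, add_assoc]
    _ = ∑ i, f (x i) + (n + 1 : ℝ) * L * (γ * (1 - γ)) * δ ^ 2 := by
        rw [hK]
        field_simp

/-- Maximum increase in summed function values due to one shrinking step: for an
`L`-smooth `f` and a regular simplex of radius `δ`,
`∑ f(x_i^{new}) ≤ ∑ f(x_i) + (n+1)·L·γ(1−γ)·δ²`. -/
theorem shrink_increase_bound (n : ℕ) (hn : 1 ≤ n) (L : ℝ) (hL : 0 < L)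
    (f : EuclideanSpace ℝ (Fin n) → ℝ)
    (hdiff : Differentiable ℝ f)
    (hlip : ∀ y z : EuclideanSpace ℝ (Fin n),
      ‖gradient f y - gradient f z‖ ≤ L * ‖y - z‖)
    (x : Fin (n + 1) → EuclideanSpace ℝ (Fin n))
    (c : EuclideanSpace ℝ (Fin n)) (δ : ℝ) (hδ : 0 < δ)
    (hc : c = (1 / (n + 1 : ℝ)) • ∑ i, x i)
    (hrad : ∀ i, ‖x i - c‖ = δ)
    (hinner : ∀ i j : Fin (n + 1), i ≠ j →
      (inner ℝ (x i - c) (x j - c) : ℝ) = -δ ^ 2 / n)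
    (hbest : ∀ i, f (x 0) ≤ f (x i))
    (γ : ℝ) (hγ : γ ∈ Set.Ioo (0 : ℝ) 1)
    (y : Fin (n + 1) → EuclideanSpace ℝ (Fin n))
    (hy : ∀ i : Fin (n + 1), y i = if i = 0 then x 0 else γ • x i + (1 - γ) • x 0) :
    ∑ i, f (y i) ≤ ∑ i, f (x i) + (n + 1 : ℝ) * L * (γ * (1 - γ)) * δ ^ 2 :=
  shrink_increase_bound_general n hn L f hdiff hlip x c δ hrad hinner hbest γ hγ y hy
end
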